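/- In a location-family random utility model on m ≥ 2 alternatives with measurable probability densities f_1,…,f_m that are strictly positive everywhere on ℝ, let D = (π^1,…,π^n) be data, and suppose alternative j is ranked above alternative j′ in at least one ranking π^i of D. Then there exists Q ∈ ℝ such that every θ ∈ ℝ^m with l(θ;D) ≥ l(0;D) satisfies θ_{j′} − θ_j < Q. In particular, θ_{j′} − θ_j is bounded above uniformly over all global maximizers of the log-likelihood. -/

import Mathlib

open MeasureTheory

/-- The probability that the ranking `π` is realized in a location-family random
utility model with noise densities `f j` and location parameters `θ j`. -/
noncomputable def rumProb {m : ℕ} (f : Fin m → ℝ → ℝ) (θ : Fin m → ℝ)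
    (π : Equiv.Perm (Fin m)) : ℝ :=
  ∫ x in {x : Fin m → ℝ | ∀ k l : Fin m, k < l → x (π l) < x (π k)},
    ∏ j, f j (x j - θ j)

/-- The log-likelihood of data `D` of rankings, valued in the extended reals
(so that rankings of probability `0` contribute `⊥ = −∞`). -/
noncomputable def logLik {m n : ℕ} (f : Fin m → ℝ → ℝ)
    (D : Fin n → Equiv.Perm (Fin m)) (θ : Fin m → ℝ) : EReal :=
  ∑ i, ENNReal.log (ENNReal.ofReal (rumProb f θ (D i)))

/-!
Every ranking has probability in `(0, 1]`, so `l(θ) ≥ l(0)` forces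
`Pr(π^i | θ) ≥ c := ∏ₖ Pr(π^k | 0) > 0`. As `π^i` ranks `j` above `j'`, translating by `θ` bounds
`Pr(π^i | θ)` by the mass the unshifted noise puts on `{y | y_{j'} - y_j < θ_j - θ_{j'}}`, and this
mass tends to `0` as `θ_{j'} - θ_j → ∞` by dominated convergence.
-/

open Filter Topology

lemma ENNReal.log_prod {ι : Type*} (s : Finset ι) (x : ι → ENNReal) :
    ENNReal.log (∏ k ∈ s, x k) = ∑ k ∈ s, ENNReal.log (x k) := by
  classical
  induction s using Finset.induction with
  | empty => simp
  | insert _ _ h ih => rw [Finset.prod_insert h, Finset.sum_insert h, ENNReal.log_mul_add, ih]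

/-- Since every `q k ≤ 1`, dropping all factors of `∏ q` but one can only increase it. -/
lemma prod_le_of_sum_log_ofReal_le {ι : Type*} [Fintype ι] {p q : ι → ℝ}
    (hp : ∀ k, 0 < p k) (hq : ∀ k, q k ≤ 1)
    (h : ∑ k, ENNReal.log (ENNReal.ofReal (p k)) ≤ ∑ k, ENNReal.log (ENNReal.ofReal (q k)))
    (i : ι) : ∏ k, p k ≤ q i := by
  classical
  have hprod : ENNReal.ofReal (∏ k, p k) ≤ ∏ k, ENNReal.ofReal (q k) := by
    rwa [ENNReal.ofReal_prod_of_nonneg fun k _ => (hp k).le, ← ENNReal.log_le_log_iff,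
      ENNReal.log_prod, ENNReal.log_prod]
  have hdrop : ∏ k, ENNReal.ofReal (q k) ≤ ENNReal.ofReal (q i) := by
    rw [← Finset.mul_prod_erase _ _ (Finset.mem_univ i)]
    exact mul_le_of_le_one_right' (Finset.prod_le_one' fun k _ => ENNReal.ofReal_le_one.2 (hq k))
  exact (ENNReal.ofReal_le_ofReal_iff'.1 (hprod.trans hdrop)).resolve_right
    (Finset.prod_pos fun k _ => hp k).not_ge

lemma tendsto_setIntegral_setOf_lt_atBot {α : Type*} [MeasurableSpace α] {μ : Measure α}
    {F g : α → ℝ} (hF : Integrable F μ) (hg : Measurable g) :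
    Tendsto (fun s => ∫ x in {x | g x < s}, F x ∂μ) atBot (𝓝 0) := by
  have hmeas : ∀ s, MeasurableSet {x | g x < s} := fun s => measurableSet_lt hg measurable_const
  simp_rw [← integral_indicator (hmeas _)]
  have hlim : ∀ x, Tendsto (fun s => {x | g x < s}.indicator F x) atBot (𝓝 0) := fun x =>
    tendsto_const_nhds.congr' <| (eventually_le_atBot (g x)).mono fun s hs =>
      (Set.indicator_of_notMem (s := {x | g x < s}) (not_lt.2 hs) F).symm
  simpa using tendsto_integral_filter_of_dominated_convergence (fun x => ‖F x‖)
    (Eventually.of_forall fun s => hF.aestronglyMeasurable.indicator (hmeas s))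
    (Eventually.of_forall fun s => ae_of_all _ fun x => norm_indicator_le_norm_self F x)
    hF.norm (ae_of_all _ hlim)

section ProductDensity

variable {ι : Type*} [Fintype ι] {f : ι → ℝ → ℝ}

lemma integrable_prod_sub (hf : ∀ j, Integrable (f j)) (θ : ι → ℝ) :
    Integrable fun x : ι → ℝ => ∏ j, f j (x j - θ j) :=
  Integrable.fintype_prod (f := fun j t => f j (t - θ j)) fun j => (hf j).comp_sub_right (θ j)

lemma integral_prod_sub (hf : ∀ j, ∫ x, f j x = 1) (θ : ι → ℝ) :
    ∫ x : ι → ℝ, ∏ j, f j (x j - θ j) = 1 := by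
  rw [integral_fintype_prod_volume_eq_prod (f := fun j t => f j (t - θ j))]
  simp [integral_sub_right_eq_self, hf]

end ProductDensity

section Ranking

variable {m : ℕ}

def rankingRegion (π : Equiv.Perm (Fin m)) : Set (Fin m → ℝ) :=
  {x | ∀ k l : Fin m, k < l → x (π l) < x (π k)}

lemma isOpen_rankingRegion (π : Equiv.Perm (Fin m)) : IsOpen (rankingRegion π) := by
  simp only [rankingRegion, Set.ofPred_forall]
  refine isOpen_iInter_of_finite fun k => isOpen_iInter_of_finite fun l => ?_
  by_cases hkl : k < l
  · simpa [hkl] using isOpen_lt (continuous_apply (π l)) (continuous_apply (π k))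
  · simp [hkl]

lemma rankingRegion_nonempty (π : Equiv.Perm (Fin m)) : (rankingRegion π).Nonempty :=
  ⟨fun a => -((π.symm a : ℕ) : ℝ), fun k l hkl => by simpa using hkl⟩

lemma rankingRegion_subset {π : Equiv.Perm (Fin m)} {j j' : Fin m} (h : π.symm j < π.symm j') :
    rankingRegion π ⊆ {x | x j' < x j} := fun x hx => by
  simpa using hx _ _ h

end Ranking

section RandomUtility

variable {m : ℕ} {f : Fin m → ℝ → ℝ}

lemma rumProb_pos (hpos : ∀ j x, 0 < f j x) (hf : ∀ j, Integrable (f j))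
    (θ : Fin m → ℝ) (π : Equiv.Perm (Fin m)) : 0 < rumProb f θ π := by
  have hsupp : Function.support (fun x : Fin m → ℝ => ∏ k, f k (x k - θ k)) = Set.univ :=
    Set.eq_univ_of_forall fun x => (Finset.prod_pos fun k _ => hpos k _).ne'
  rw [rumProb, setIntegral_pos_iff_support_of_nonneg_ae
    (ae_of_all _ fun x => Finset.prod_nonneg fun k _ => (hpos k _).le)
    (integrable_prod_sub hf θ).integrableOn, hsupp, Set.univ_inter]
  exact (isOpen_rankingRegion π).measure_pos volume (rankingRegion_nonempty π)

lemma rumProb_le_one (hnonneg : ∀ j x, 0 ≤ f j x) (hint : ∀ j, ∫ x, f j x = 1)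
    (θ : Fin m → ℝ) (π : Equiv.Perm (Fin m)) : rumProb f θ π ≤ 1 := by
  rw [rumProb, ← integral_prod_sub hint θ]
  exact setIntegral_le_integral
    (integrable_prod_sub (fun j => integrable_of_integral_eq_one (hint j)) θ)
    (ae_of_all _ fun x => Finset.prod_nonneg fun k _ => hnonneg k _)

/-- Translating by `θ`, the event `x_{j'} < x_j` for the shifted noise becomes the event
`y_{j'} - y_j < θ_j - θ_{j'}` for the unshifted one. -/
lemma rumProb_le_setIntegral_sub_lt (hnonneg : ∀ j x, 0 ≤ f j x) (hf : ∀ j, Integrable (f j))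
    {π : Equiv.Perm (Fin m)} {j j' : Fin m} (h : π.symm j < π.symm j') (θ : Fin m → ℝ) :
    rumProb f θ π ≤ ∫ y in {y : Fin m → ℝ | y j' - y j < θ j - θ j'}, ∏ k, f k (y k) := by
  have hpre : (· - θ) ⁻¹' {y : Fin m → ℝ | y j' - y j < θ j - θ j'} = {x | x j' < x j} := by
    ext x
    simp only [Set.mem_preimage, Set.mem_ofPred_eq, Pi.sub_apply]
    constructor <;> intro <;> linarith
  calc rumProb f θ π ≤ ∫ x in {x : Fin m → ℝ | x j' < x j}, ∏ k, f k (x k - θ k) :=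
        setIntegral_mono_set (integrable_prod_sub hf θ).integrableOn
          (ae_of_all _ fun x => Finset.prod_nonneg fun k _ => hnonneg k _)
          (rankingRegion_subset h).eventuallyLE
    _ = _ := by
      rw [← hpre]
      exact (measurePreserving_sub_right volume θ).setIntegral_preimage_emb
        (measurableEmbedding_subRight θ) (fun y => ∏ k, f k (y k)) _

end RandomUtility

theorem stmt11_general (m : ℕ) (f : Fin m → ℝ → ℝ)
    (hpos : ∀ j x, 0 < f j x)
    (hint : ∀ j, ∫ x, f j x = 1)
    (n : ℕ) (D : Fin n → Equiv.Perm (Fin m))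
    (j j' : Fin m) (i : Fin n) (hrank : (D i).symm j < (D i).symm j') :
    ∃ Q : ℝ, ∀ θ : Fin m → ℝ,
      logLik f D (fun _ => 0) ≤ logLik f D θ → θ j' - θ j < Q := by
  have hf : ∀ k, Integrable (f k) := fun k => integrable_of_integral_eq_one (hint k)
  have hnonneg : ∀ k x, 0 ≤ f k x := fun k x => (hpos k x).le
  set c := ∏ k, rumProb f (fun _ => 0) (D k)
  have hc : 0 < c := Finset.prod_pos fun k _ => rumProb_pos hpos hf _ _
  have htail := tendsto_setIntegral_setOf_lt_atBot (μ := volume) (g := fun y => y j' - y j)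
    (Integrable.fintype_prod hf) (by fun_prop)
  obtain ⟨s₀, hs₀⟩ := eventually_atBot.1 (htail.eventually (gt_mem_nhds hc))
  refine ⟨-s₀, fun θ hθ => ?_⟩
  by_contra! hQ
  have hlik : c ≤ rumProb f θ (D i) := prod_le_of_sum_log_ofReal_le
    (fun k => rumProb_pos hpos hf _ _) (fun k => rumProb_le_one hnonneg hint _ _) hθ i
  have hbound := rumProb_le_setIntegral_sub_lt hnonneg hf hrank θ
  linarith [hs₀ (θ j - θ j') (by linarith)]

/-- If alternative `j` is ranked above `j'` in at least one ranking of the data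
(`(D i).symm j < (D i).symm j'`), then `θ_{j'} − θ_j` is bounded above, uniformly
over all `θ` whose log-likelihood is at least that of the all-zeros parameter
vector — in particular over all global maximizers of the log-likelihood. -/
theorem stmt11 (m : ℕ) (hm : 2 ≤ m) (f : Fin m → ℝ → ℝ)
    (hmeas : ∀ j, Measurable (f j))
    (hpos : ∀ j x, 0 < f j x)
    (hint : ∀ j, ∫ x, f j x = 1)
    (n : ℕ) (D : Fin n → Equiv.Perm (Fin m))
    (j j' : Fin m) (i : Fin n) (hrank : (D i).symm j < (D i).symm j') :
    ∃ Q : ℝ, ∀ θ : Fin m → ℝ,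
      logLik f D (fun _ => 0) ≤ logLik f D θ → θ j' - θ j < Q :=
  stmt11_general m f hpos hint n D j j' i hrank
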